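/- For n ≥ 2, all higher blow-up relations (B_r) for 2 ≤ r ≤ n are implied by the two-term blow-up relation (B_2) together with the symmetry relations. Precisely: in the free abelian group on symmetric symbols [a_1,...,a_n] satisfying the generation condition, modulo the relations (B_2), the relation [a_1,...,a_r,b_1,...,b_{n-r}] = Σ_{i: a_i ∉ {a_1,...,a_{i-1}}} [a_1 - a_i, ..., a_i, ..., a_r - a_i, b_1, ..., b_{n-r}] holds for every r with 2 ≤ r ≤ n. -/

import Mathlib

open FreeAbelianGroup

/-- A multiset of characters generates the character group. -/
def Adm {A : Type} [AddCommGroup A] (s : Multiset A) : Prop :=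
  AddSubgroup.closure {x | x ∈ s} = ⊤

/-- Admissible symbols: multisets of `n` characters generating `A`. -/
def Symb (A : Type) [AddCommGroup A] (n : ℕ) : Type :=
  {s : Multiset A // Multiset.card s = n ∧ Adm s}

/-- The blow-up relations (B₂). -/
def blowupRels (A : Type) [AddCommGroup A] (n : ℕ) :
    Set (FreeAbelianGroup (Symb A n)) :=
  {x | ∃ (a b : A) (t : Multiset A)
      (h : Multiset.card (a ::ₘ b ::ₘ t) = n ∧ Adm (a ::ₘ b ::ₘ t))
      (h1 : Multiset.card (a ::ₘ (b - a) ::ₘ t) = n ∧ Adm (a ::ₘ (b - a) ::ₘ t))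
      (h2 : Multiset.card ((a - b) ::ₘ b ::ₘ t) = n ∧ Adm ((a - b) ::ₘ b ::ₘ t)),
      a ≠ b ∧
      x = of (⟨a ::ₘ b ::ₘ t, h⟩ : Symb A n) - of ⟨a ::ₘ (b - a) ::ₘ t, h1⟩
            - of ⟨(a - b) ::ₘ b ::ₘ t, h2⟩} ∪
  {x | ∃ (a : A) (t : Multiset A)
      (h : Multiset.card (a ::ₘ a ::ₘ t) = n ∧ Adm (a ::ₘ a ::ₘ t))
      (h0 : Multiset.card ((0 : A) ::ₘ a ::ₘ t) = n ∧ Adm ((0 : A) ::ₘ a ::ₘ t)),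
      x = of (⟨a ::ₘ a ::ₘ t, h⟩ : Symb A n) - of ⟨(0 : A) ::ₘ a ::ₘ t, h0⟩}

/-- The group of equivariant birational types `𝓑ₙ(G)`, for `A = G^∨`. -/
def B (A : Type) [AddCommGroup A] (n : ℕ) : Type :=
  FreeAbelianGroup (Symb A n) ⧸ AddSubgroup.closure (blowupRels A n)

instance (A : Type) [AddCommGroup A] (n : ℕ) : AddCommGroup (B A n) := by
  unfold B; infer_instance

/-- The class of a symbol in `𝓑ₙ(G)`. -/
def symb {A : Type} [AddCommGroup A] {n : ℕ} (s : Multiset A)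
    (h : Multiset.card s = n ∧ Adm s) : B A n :=
  QuotientAddGroup.mk (of (⟨s, h⟩ : Symb A n))

lemma adm_of_unit {N : ℕ} [NeZero N] {s : Multiset (ZMod N)} {u : ZMod N}
    (hu : u ∈ s) (h : IsUnit u) : Adm s := by
  rw [Adm, AddSubgroup.eq_top_iff']
  intro x
  have hu' : u ∈ AddSubgroup.closure {y | y ∈ s} := AddSubgroup.subset_closure hu
  obtain ⟨v, hv⟩ := h.exists_left_inv
  have hx : x = (x * v).val • u := by
    rw [nsmul_eq_mul, ZMod.natCast_val, ZMod.cast_id, mul_assoc, hv, mul_one]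
  rw [hx]
  exact AddSubgroup.nsmul_mem _ hu' _

/-! The relation `(B_r)` is proved by induction on `r`, with the trivial `(B_1)` as base case.
Write the list as `a :: l`. By `(B_{r-1})` for `l`, with `a` moved among the `b`'s,
`[a, l, t]` is the sum of the symbols `[l_i, a, (l_j - l_i)_{j ≠ i}, t]`. Applying `(B₂)` to the
pair `(l_i, a)` splits each of them into `[l_i, a - l_i, …]`, which is the `(i+1)`-st summand of
`(B_r)` for `a :: l`, and `[l_i - a, a, …]`; if `l_i = a`, the second case of `(B₂)` leaves
only the latter. By `(B_{r-1})` for `l - a` these last symbols add up to `[a, l - a, t]`, the summand of `(B_r)` for `i = 0`. -/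

section HigherBlowup

variable {A : Type} [AddCommGroup A]

lemma closure_insert_insert_sub (a b : A) (s : Set A) :
    AddSubgroup.closure (insert a (insert (b - a) s)) =
      AddSubgroup.closure (insert a (insert b s)) := by
  apply le_antisymm <;> rw [AddSubgroup.closure_le] <;>
    refine Set.insert_subset_iff.2 ⟨AddSubgroup.subset_closure (Set.mem_insert _ _),
      Set.insert_subset_iff.2 ⟨?_, fun x hx => AddSubgroup.subset_closure (by simp [hx])⟩⟩
  · exact sub_mem (AddSubgroup.subset_closure (by simp)) (AddSubgroup.subset_closure (by simp))
  · rw [← sub_add_cancel b a]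
    exact add_mem (AddSubgroup.subset_closure (by simp)) (AddSubgroup.subset_closure (by simp))

lemma adm_cons_cons_sub_iff (a b : A) (u : Multiset A) :
    Adm (a ::ₘ (b - a) ::ₘ u) ↔ Adm (a ::ₘ b ::ₘ u) := by
  have hcons : ∀ (c : A) (s : Multiset A), {x | x ∈ c ::ₘ s} = insert c {x | x ∈ s} :=
    fun _ _ => Set.ext fun _ => Multiset.mem_cons
  simp only [Adm, hcons, closure_insert_insert_sub]

lemma symb_blowup {n : ℕ} {a b : A} (hab : a ≠ b) (u : Multiset A)
    (h : Multiset.card (a ::ₘ b ::ₘ u) = n ∧ Adm (a ::ₘ b ::ₘ u))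
    (h₁ : Multiset.card (a ::ₘ (b - a) ::ₘ u) = n ∧ Adm (a ::ₘ (b - a) ::ₘ u))
    (h₂ : Multiset.card ((a - b) ::ₘ b ::ₘ u) = n ∧ Adm ((a - b) ::ₘ b ::ₘ u)) :
    symb (a ::ₘ b ::ₘ u) h = symb (a ::ₘ (b - a) ::ₘ u) h₁ + symb ((a - b) ::ₘ b ::ₘ u) h₂ := by
  rw [← sub_eq_zero, ← sub_sub]
  exact (QuotientAddGroup.eq_zero_iff _).2
    (AddSubgroup.subset_closure (Or.inl ⟨a, b, u, h, h₁, h₂, hab, rfl⟩))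

lemma symb_blowup_self {n : ℕ} (a : A) (u : Multiset A)
    (h : Multiset.card (a ::ₘ a ::ₘ u) = n ∧ Adm (a ::ₘ a ::ₘ u))
    (h₀ : Multiset.card ((0 : A) ::ₘ a ::ₘ u) = n ∧ Adm ((0 : A) ::ₘ a ::ₘ u)) :
    symb (a ::ₘ a ::ₘ u) h = symb ((0 : A) ::ₘ a ::ₘ u) h₀ := by
  rw [← sub_eq_zero]
  exact (QuotientAddGroup.eq_zero_iff _).2
    (AddSubgroup.subset_closure (Or.inr ⟨a, u, h, h₀, rfl⟩))

/-- Since `(B₂)` preserves admissibility, the relations hold for this extension by `0` without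
side conditions. -/
noncomputable def symbOrZero (n : ℕ) (s : Multiset A) : B A n :=
  open Classical in if h : Multiset.card s = n ∧ Adm s then symb s h else 0

lemma symbOrZero_eq_symb {n : ℕ} {s : Multiset A} (h : Multiset.card s = n ∧ Adm s) :
    symbOrZero n s = symb s h :=
  dif_pos h

lemma symbOrZero_eq_zero {n : ℕ} {s : Multiset A} (h : ¬(Multiset.card s = n ∧ Adm s)) :
    symbOrZero n s = 0 :=
  dif_neg h

lemma symbOrZero_blowup (n : ℕ) {a b : A} (hab : a ≠ b) (u : Multiset A) :
    symbOrZero n (a ::ₘ b ::ₘ u) =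
      symbOrZero n (a ::ₘ (b - a) ::ₘ u) + symbOrZero n ((a - b) ::ₘ b ::ₘ u) := by
  have h₁ : Adm (a ::ₘ (b - a) ::ₘ u) ↔ Adm (a ::ₘ b ::ₘ u) := adm_cons_cons_sub_iff a b u
  have h₂ : Adm ((a - b) ::ₘ b ::ₘ u) ↔ Adm (a ::ₘ b ::ₘ u) := by
    rw [Multiset.cons_swap, adm_cons_cons_sub_iff, Multiset.cons_swap]
  by_cases h : Multiset.card (a ::ₘ b ::ₘ u) = n ∧ Adm (a ::ₘ b ::ₘ u)
  · rw [symbOrZero_eq_symb h, symbOrZero_eq_symb ⟨by simpa using h.1, h₁.2 h.2⟩,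
      symbOrZero_eq_symb ⟨by simpa using h.1, h₂.2 h.2⟩]
    exact symb_blowup hab u _ _ _
  · rw [symbOrZero_eq_zero h, symbOrZero_eq_zero fun h' => h ⟨by simpa using h'.1, h₁.1 h'.2⟩,
      symbOrZero_eq_zero fun h' => h ⟨by simpa using h'.1, h₂.1 h'.2⟩, add_zero]

lemma symbOrZero_blowup_self (n : ℕ) (a : A) (u : Multiset A) :
    symbOrZero n (a ::ₘ a ::ₘ u) = symbOrZero n ((0 : A) ::ₘ a ::ₘ u) := by
  have h₀ : Adm ((0 : A) ::ₘ a ::ₘ u) ↔ Adm (a ::ₘ a ::ₘ u) := by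
    rw [Multiset.cons_swap, ← sub_self a, adm_cons_cons_sub_iff]
  by_cases h : Multiset.card (a ::ₘ a ::ₘ u) = n ∧ Adm (a ::ₘ a ::ₘ u)
  · rw [symbOrZero_eq_symb h, symbOrZero_eq_symb ⟨by simpa using h.1, h₀.2 h.2⟩]
    exact symb_blowup_self a u _ _
  · rw [symbOrZero_eq_zero h, symbOrZero_eq_zero fun h' => h ⟨by simpa using h'.1, h₀.1 h'.2⟩]

variable [DecidableEq A]

/-- The `i`-th summand (counting from `0`) of `(B_r)` for the list `l`. -/
noncomputable def blowupTerm (n : ℕ) (l : List A) (t : Multiset A) (i : ℕ) : B A n :=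
  if l.getD i 0 ∉ l.take i then
    symbOrZero n (l.getD i 0 ::ₘ (↑(l.eraseIdx i) : Multiset A).map (· - l.getD i 0) + t)
  else 0

lemma blowupTerm_cons_zero (n : ℕ) (a : A) (l : List A) (t : Multiset A) :
    blowupTerm n (a :: l) t 0 = symbOrZero n ((↑(l.map (· - a)) : Multiset A) + a ::ₘ t) := by
  simp only [blowupTerm, List.getD_cons_zero, List.take_zero, List.not_mem_nil,
    not_false_eq_true, if_true, List.eraseIdx_cons_zero, Multiset.map_coe]
  rw [Multiset.cons_add, Multiset.add_cons]

lemma blowupTerm_eq_add (n : ℕ) (a : A) {l : List A} (t : Multiset A) {i : ℕ}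
    (hi : i < l.length) :
    blowupTerm n l (a ::ₘ t) i =
      blowupTerm n (a :: l) t (i + 1) + blowupTerm n (l.map (· - a)) (a ::ₘ t) i := by
  set b := l.getD i 0 with hb
  set M := (↑(l.eraseIdx i) : Multiset A).map (· - b)
  have h₀ : blowupTerm n l (a ::ₘ t) i =
      if b ∉ l.take i then symbOrZero n (b ::ₘ a ::ₘ (M + t)) else 0 := by
    simp only [blowupTerm, ← hb]
    rw [Multiset.cons_add, Multiset.add_cons]
  have h₁ : blowupTerm n (a :: l) t (i + 1) =
      if b ∉ a :: l.take i then symbOrZero n (b ::ₘ (a - b) ::ₘ (M + t)) else 0 := by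
    simp only [blowupTerm, List.getD_cons_succ, List.take_succ_cons, List.eraseIdx_cons_succ,
      ← hb, ← Multiset.cons_coe, Multiset.map_cons, Multiset.cons_add]
    rfl
  have h₂ : blowupTerm n (l.map (· - a)) (a ::ₘ t) i =
      if b ∉ l.take i then symbOrZero n ((b - a) ::ₘ a ::ₘ (M + t)) else 0 := by
    have hget : (l.map (· - a)).getD i 0 = b - a := by
      rw [List.getD_eq_getElem _ _ (by simpa using hi), List.getElem_map, hb,
        List.getD_eq_getElem _ _ hi]
    simp only [blowupTerm, hget, ← List.map_take, List.mem_map_of_injective (sub_left_injective),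
      List.eraseIdx_map, ← Multiset.map_coe, Multiset.map_map, Function.comp_def,
      sub_sub_sub_cancel_right, Multiset.cons_add, Multiset.add_cons, M]
    rw [Multiset.cons_swap]
  rw [h₀, h₁, h₂]
  by_cases hbl : b ∈ l.take i
  · simp [hbl]
  by_cases hba : b = a
  · simp [hba, symbOrZero_blowup_self]
  · simp [hbl, hba, symbOrZero_blowup n hba]

theorem symbOrZero_eq_sum_blowupTerm (n : ℕ) : ∀ (a : A) (l : List A) (t : Multiset A),
    symbOrZero n ((↑(a :: l) : Multiset A) + t) =
      ∑ i ∈ Finset.range (l.length + 1), blowupTerm n (a :: l) t i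
  | a, [], t => by simp [blowupTerm_cons_zero]
  | a, b :: l, t => by
    have ih₁ := symbOrZero_eq_sum_blowupTerm n b l (a ::ₘ t)
    have ih₂ : symbOrZero n ((↑((b :: l).map (· - a)) : Multiset A) + a ::ₘ t) =
        ∑ i ∈ Finset.range (l.length + 1), blowupTerm n ((b :: l).map (· - a)) (a ::ₘ t) i := by
      simpa only [List.map_cons, List.length_map] using
        symbOrZero_eq_sum_blowupTerm n (b - a) (l.map (· - a)) (a ::ₘ t)
    calc symbOrZero n ((↑(a :: b :: l) : Multiset A) + t)
          = symbOrZero n ((↑(b :: l) : Multiset A) + a ::ₘ t) := by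
          rw [Multiset.add_cons, ← Multiset.cons_add, Multiset.cons_coe]
      _ = ∑ i ∈ Finset.range (l.length + 1), (blowupTerm n (a :: b :: l) t (i + 1) +
            blowupTerm n ((b :: l).map (· - a)) (a ::ₘ t) i) :=
          ih₁.trans (Finset.sum_congr rfl fun i hi =>
            blowupTerm_eq_add n a t (by simpa using Finset.mem_range.1 hi))
      _ = _ := by
          rw [Finset.sum_add_distrib, ← ih₂, ← blowupTerm_cons_zero, List.length_cons,
            Finset.sum_range_succ' _ (l.length + 1)]
termination_by _ l _ => l.length

end HigherBlowup

theorem higher_blowup_relations_general {A : Type} [AddCommGroup A] [DecidableEq A]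
    {n r : ℕ} (hr : 2 ≤ r)
    (l : List A) (hlen : l.length = r) (t : Multiset A)
    (h : Multiset.card ((↑l : Multiset A) + t) = n ∧ Adm ((↑l : Multiset A) + t))
    (H : ∀ i : Fin l.length,
      Multiset.card (l.get i ::ₘ (Multiset.map (fun x => x - l.get i)
          (↑(l.eraseIdx i) : Multiset A)) + t) = n ∧
      Adm (l.get i ::ₘ (Multiset.map (fun x => x - l.get i)
          (↑(l.eraseIdx i) : Multiset A)) + t)) :
    symb ((↑l : Multiset A) + t) h =
      ∑ i ∈ Finset.univ.filter (fun i : Fin l.length => l.get i ∉ l.take i.1),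
        symb (l.get i ::ₘ (Multiset.map (fun x => x - l.get i)
          (↑(l.eraseIdx i) : Multiset A)) + t) (H i) := by
  obtain ⟨a, l, rfl⟩ := List.exists_cons_of_ne_nil (l := l) (by rintro rfl; simp at hlen; omega)
  rw [← symbOrZero_eq_symb h, symbOrZero_eq_sum_blowupTerm, Finset.sum_filter,
    ← Fin.sum_univ_eq_sum_range]
  refine Finset.sum_congr rfl fun i _ => ?_
  rw [blowupTerm, List.getD_eq_getElem _ _ i.isLt, ← List.get_eq_getElem,
    symbOrZero_eq_symb (H i)]

/-- Prop. 8.1: for `2 ≤ r ≤ n`, the higher blow-up relation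
`(B_r)` holds in the group defined by the two-term relations `(B₂)` alone:
`[a₁,…,a_r,b₁,…,b_{n-r}]` equals the sum over the indices `i` with `a_i` distinct
from all earlier `a_{i'}` of `[a₁-a_i,…,a_i,…,a_r-a_i,b₁,…,b_{n-r}]`. -/
theorem higher_blowup_relations {A : Type} [AddCommGroup A] [DecidableEq A]
    {n r : ℕ} (hr : 2 ≤ r) (hrn : r ≤ n)
    (l : List A) (hlen : l.length = r) (t : Multiset A)
    (h : Multiset.card ((↑l : Multiset A) + t) = n ∧ Adm ((↑l : Multiset A) + t))
    (H : ∀ i : Fin l.length,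
      Multiset.card (l.get i ::ₘ (Multiset.map (fun x => x - l.get i)
          (↑(l.eraseIdx i) : Multiset A)) + t) = n ∧
      Adm (l.get i ::ₘ (Multiset.map (fun x => x - l.get i)
          (↑(l.eraseIdx i) : Multiset A)) + t)) :
    symb ((↑l : Multiset A) + t) h =
      ∑ i ∈ Finset.univ.filter (fun i : Fin l.length => l.get i ∉ l.take i.1),
        symb (l.get i ::ₘ (Multiset.map (fun x => x - l.get i)
          (↑(l.eraseIdx i) : Multiset A)) + t) (H i) :=
  higher_blowup_relations_general hr l hlen t h H
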